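/- For every positive integer d and every v ∈ {0,1}^d with v ≠ 0, the dimension of the affine hull of the revlex-initial 0/1-polytope P(v) equals 1 + max({i ∈ {0,…,d−1} : e_i ≺_rlex v} ∪ {−1}), where e_i is the i-th standard unit vector; equivalently, with n = Σ_i 2^i v_i (which is the number of vertices of P(v)), the dimension of P(v) equals min{j ∈ ℕ : n ≤ 2^j}. -/

import Mathlib

open Finset

/-- The set of 0/1-vectors in ℝ^d. -/
def ZeroOne (d : ℕ) : Set (Fin d → ℝ) := {x | ∀ i, x i = 0 ∨ x i = 1}

/-- `x` is reverse-lexicographically smaller than `y`: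
there is an index `m` with `x m < y m` and `x i = y i` for all `i > m`
(equivalently, `x m < y m` for `m` the largest index where `x` and `y` differ). -/
def RlexLt {d : ℕ} (x y : Fin d → ℝ) : Prop :=
  ∃ m : Fin d, x m < y m ∧ ∀ i : Fin d, m < i → x i = y i

/-- `X(v)`: the 0/1-points revlex-smaller than `v`. -/
def Xset {d : ℕ} (v : Fin d → ℝ) : Set (Fin d → ℝ) :=
  {x | x ∈ ZeroOne d ∧ RlexLt x v}

/-- The revlex-initial 0/1-polytope `P(v) = conv X(v)`. -/
noncomputable def Pset {d : ℕ} (v : Fin d → ℝ) : Set (Fin d → ℝ) :=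
  convexHull ℝ (Xset v)

/-- `Sig(v)`: the support of `v` (the indices of its one-entries). -/
noncomputable def Sig {d : ℕ} (v : Fin d → ℝ) : Finset (Fin d) :=
  @Finset.filter (Fin d) (fun i => v i = 1) (Classical.decPred _) Finset.univ

/-- `Sig_{>i}(v)`: the elements of `Sig(v)` above `i`. -/
noncomputable def SigGt {d : ℕ} (v : Fin d → ℝ) (i : Fin d) : Finset (Fin d) :=
  (Sig v).filter (fun j => i < j)

/-- The dimension of the affine hull of a set in ℝ^d. -/
noncomputable def adim {d : ℕ} (s : Set (Fin d → ℝ)) : ℕ :=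
  Module.finrank ℝ (affineSpan ℝ s).direction

/-- A face of a polytope: a convex extreme subset. -/
def IsFaceOf {d : ℕ} (P F : Set (Fin d → ℝ)) : Prop :=
  Convex ℝ F ∧ IsExtreme ℝ P F

/-- The number of indices satisfying a predicate. -/
noncomputable def cnt {d : ℕ} (p : Fin d → Prop) : ℕ :=
  (@Finset.filter (Fin d) p (Classical.decPred _) Finset.univ).card

/-!
Identify a 0/1-vector `x` with its support `Sig x` and with the number
`binaryValue x = ∑_{i ∈ Sig x} 2^i`. Reverse-lexicographic order of 0/1-vectors is colex order of
their supports, which is the order of binary values, so `X(v)` is the set of 0/1-vectors of value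
below `n = binaryValue v`. With `j = ⌈log₂ n⌉`, every such vector is supported in `{0, …, j-1}`,
while every unit vector `e_i` with `i < j` has value `2^i < n`. Hence `X(v)` contains `0` and
spans the coordinate subspace of the first `j` unit vectors, of dimension `j`.
-/

noncomputable def binaryValue {d : ℕ} (x : Fin d → ℝ) : ℕ := ∑ i ∈ Sig x, 2 ^ (i : ℕ)

open Finset.Colex

lemma Nat.sInf_setOf_le_pow_eq_clog {b : ℕ} (hb : 1 < b) (n : ℕ) :
    sInf {j : ℕ | n ≤ b ^ j} = Nat.clog b n :=
  le_antisymm (Nat.sInf_le (Nat.le_pow_clog hb n))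
    (le_csInf ⟨_, Nat.le_pow_clog hb n⟩ fun _ => Nat.clog_le_of_le_pow)

lemma Finset.sum_two_pow_val_lt_iff_toColex_lt {d : ℕ} {s t : Finset (Fin d)} :
    ∑ i ∈ s, 2 ^ (i : ℕ) < ∑ i ∈ t, 2 ^ (i : ℕ) ↔ toColex s < toColex t := by
  rw [← toColex_image_lt_toColex_image Fin.val_strictMono,
    ← geomSum_lt_geomSum_iff_toColex_lt_toColex le_rfl,
    sum_image Fin.val_injective.injOn, sum_image Fin.val_injective.injOn]

section ZeroOne

variable {d : ℕ} {x y : Fin d → ℝ}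

lemma mem_Sig {i : Fin d} : i ∈ Sig x ↔ x i = 1 := by
  simp [Sig]

lemma apply_lt_apply_iff_of_mem_ZeroOne (hx : x ∈ ZeroOne d) (hy : y ∈ ZeroOne d) (i : Fin d) :
    x i < y i ↔ i ∉ Sig x ∧ i ∈ Sig y := by
  simp only [mem_Sig]
  rcases hx i with h | h <;> rcases hy i with h' | h' <;> norm_num [h, h']

lemma rlexLt_iff_toColex_lt (hx : x ∈ ZeroOne d) (hy : y ∈ ZeroOne d) :
    RlexLt x y ↔ toColex (Sig x) < toColex (Sig y) := by
  rw [toColex_lt_toColex_iff_exists_forall_lt]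
  constructor
  · rintro ⟨m, hm, habove⟩
    obtain ⟨hmx, hmy⟩ := (apply_lt_apply_iff_of_mem_ZeroOne hx hy m).1 hm
    refine ⟨m, hmy, hmx, fun b hbx hby => ?_⟩
    by_contra! hmb
    have hbm : m < b := lt_of_le_of_ne hmb (by rintro rfl; exact hmx hbx)
    exact hby (mem_Sig.2 (habove b hbm ▸ mem_Sig.1 hbx))
  · rintro ⟨a, hay, hax, hbelow⟩
    classical
    set D := univ.filter fun i => x i ≠ y i
    have haD : a ∈ D := by
      simp only [D, mem_filter, mem_univ, true_and]
      exact fun h => hax (mem_Sig.2 (h ▸ mem_Sig.1 hay))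
    -- `m` cannot lie in `Sig x \ Sig y`, whose elements are below `a ≤ m`
    set m := D.max' ⟨a, haD⟩
    have hmD : m ∈ D := D.max'_mem _
    refine ⟨m, ?_, fun i hmi => ?_⟩
    · rcases lt_or_gt_of_ne (mem_filter.1 hmD).2 with h | h
      · exact h
      · obtain ⟨hmy, hmx⟩ := (apply_lt_apply_iff_of_mem_ZeroOne hy hx m).1 h
        exact absurd (hbelow m hmx hmy) (not_lt.2 (D.le_max' a haD))
    · by_contra hne
      exact absurd (D.le_max' i (by simp [D, hne])) (not_le.2 hmi)

lemma rlexLt_iff_binaryValue_lt (hx : x ∈ ZeroOne d) (hy : y ∈ ZeroOne d) :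
    RlexLt x y ↔ binaryValue x < binaryValue y := by
  rw [rlexLt_iff_toColex_lt hx hy, binaryValue, binaryValue,
    Finset.sum_two_pow_val_lt_iff_toColex_lt]

lemma zero_mem_ZeroOne : (0 : Fin d → ℝ) ∈ ZeroOne d := fun _ => Or.inl rfl

lemma single_mem_ZeroOne (i : Fin d) : Pi.single i (1 : ℝ) ∈ ZeroOne d := by
  intro k
  rcases eq_or_ne k i with rfl | h
  · simp
  · simp [h]

@[simp]
lemma binaryValue_zero : binaryValue (0 : Fin d → ℝ) = 0 := by
  simp [binaryValue, Sig]

lemma binaryValue_single (i : Fin d) : binaryValue (Pi.single i (1 : ℝ)) = 2 ^ (i : ℕ) := by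
  have : Sig (Pi.single i (1 : ℝ)) = {i} := by
    ext k
    rcases eq_or_ne k i with rfl | h <;> simp [mem_Sig, *]
  rw [binaryValue, this, sum_singleton]

lemma two_pow_le_binaryValue {x : Fin d → ℝ} {i : Fin d} (h : x i = 1) :
    2 ^ (i : ℕ) ≤ binaryValue x :=
  single_le_sum (f := fun j : Fin d => 2 ^ (j : ℕ)) (fun _ _ => Nat.zero_le _) (mem_Sig.2 h)

lemma clog_binaryValue_le (x : Fin d → ℝ) : Nat.clog 2 (binaryValue x) ≤ d := by
  refine Nat.clog_le_of_le_pow (le_of_lt ?_)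
  rw [binaryValue, ← sum_image Fin.val_injective.injOn]
  exact Nat.geomSum_lt le_rfl (by simp)

end ZeroOne

section Xset

variable {d : ℕ} {v : Fin d → ℝ}

lemma rlexLt_single_iff (hv : v ∈ ZeroOne d) (i : Fin d) :
    RlexLt (Pi.single i (1 : ℝ)) v ↔ (i : ℕ) < Nat.clog 2 (binaryValue v) := by
  rw [rlexLt_iff_binaryValue_lt (single_mem_ZeroOne i) hv, binaryValue_single,
    Nat.lt_clog_iff_pow_lt one_lt_two]

lemma apply_eq_zero_of_mem_Xset (hv : v ∈ ZeroOne d) {x : Fin d → ℝ} (hx : x ∈ Xset v)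
    {i : Fin d} (hi : Nat.clog 2 (binaryValue v) ≤ i) : x i = 0 := by
  refine (hx.1 i).resolve_right fun h => hi.not_gt ?_
  rw [Nat.lt_clog_iff_pow_lt one_lt_two]
  exact (two_pow_le_binaryValue h).trans_lt ((rlexLt_iff_binaryValue_lt hx.1 hv).1 hx.2)

lemma zero_mem_Xset (hv : v ∈ ZeroOne d) (hv0 : v ≠ 0) : (0 : Fin d → ℝ) ∈ Xset v := by
  obtain ⟨i, hi⟩ := Function.ne_iff.1 hv0
  refine ⟨zero_mem_ZeroOne, (rlexLt_iff_binaryValue_lt zero_mem_ZeroOne hv).2 ?_⟩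
  rw [binaryValue_zero]
  exact (Nat.two_pow_pos _).trans_le (two_pow_le_binaryValue ((hv i).resolve_left hi))

end Xset

section CoordinateSubspace

variable {R : Type*} {d j : ℕ} (h : j ≤ d)

lemma mem_span_basisFun_castLE [Semiring R] {x : Fin d → R}
    (hx : ∀ i : Fin d, j ≤ (i : ℕ) → x i = 0) :
    x ∈ Submodule.span R (Set.range fun k : Fin j => Pi.basisFun R (Fin d) (Fin.castLE h k)) := by
  rw [← univ_sum_single x]
  refine Submodule.sum_mem _ fun i _ => ?_
  by_cases hij : (i : ℕ) < j
  · have : Pi.single i (x i) = x i • Pi.basisFun R (Fin d) (Fin.castLE h ⟨i, hij⟩) := by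
      ext k
      rcases eq_or_ne k i with rfl | hk <;> simp [Fin.castLE, *]
    exact this ▸ Submodule.smul_mem _ _ (Submodule.subset_span ⟨_, rfl⟩)
  · simp [hx i (not_lt.1 hij)]

lemma finrank_span_basisFun_castLE [Ring R] [Nontrivial R] [StrongRankCondition R] :
    Module.finrank R
      (Submodule.span R (Set.range fun k : Fin j => Pi.basisFun R (Fin d) (Fin.castLE h k))) = j :=
  (finrank_span_eq_card ((Pi.basisFun R (Fin d)).linearIndependent.comp _
    (Fin.castLE_injective h))).trans (Fintype.card_fin j)

end CoordinateSubspace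

lemma adim_convexHull_of_zero_mem {d : ℕ} {s : Set (Fin d → ℝ)} (h0 : 0 ∈ s) :
    adim (convexHull ℝ s) = Module.finrank ℝ (Submodule.span ℝ s) := by
  have : vectorSpan ℝ s = Submodule.span ℝ s := by
    simp [vectorSpan_eq_span_vsub_set_right ℝ h0]
  rw [adim, affineSpan_convexHull, direction_affineSpan, this]

lemma adim_Pset {d : ℕ} {v : Fin d → ℝ} (hv : v ∈ ZeroOne d) (hv0 : v ≠ 0) :
    adim (Pset v) = Nat.clog 2 (binaryValue v) := by
  have hjd := clog_binaryValue_le v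
  have hspan : Submodule.span ℝ (Xset v) = Submodule.span ℝ
      (Set.range fun k : Fin (Nat.clog 2 (binaryValue v)) =>
        Pi.basisFun ℝ (Fin d) (Fin.castLE hjd k)) := by
    refine le_antisymm (Submodule.span_le.2 fun x hx => ?_) (Submodule.span_mono ?_)
    · exact mem_span_basisFun_castLE hjd fun i => apply_eq_zero_of_mem_Xset hv hx
    · rintro _ ⟨k, rfl⟩
      simp only [Pi.basisFun_apply]
      exact ⟨single_mem_ZeroOne _, (rlexLt_single_iff hv _).2 k.isLt⟩
  rw [Pset, adim_convexHull_of_zero_mem (zero_mem_Xset hv hv0), hspan,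
    finrank_span_basisFun_castLE]

lemma max'_insert_neg_one_image_val {d j : ℕ} (hj : j ≤ d) {F : Finset (Fin d)}
    (hF : ∀ i, i ∈ F ↔ (i : ℕ) < j) :
    (insert (-1 : ℤ) (F.image fun i : Fin d => ((i : ℕ) : ℤ))).max' (insert_nonempty _ _) =
      j - 1 := by
  refine le_antisymm (max'_le _ _ _ fun y hy => ?_) (le_max' _ _ ?_)
  · rcases mem_insert.1 hy with rfl | hy
    · omega
    · obtain ⟨i, hi, rfl⟩ := mem_image.1 hy
      have := (hF i).1 hi
      omega
  · rcases Nat.eq_zero_or_pos j with rfl | hj0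
    · simp
    · refine mem_insert_of_mem (mem_image.2 ⟨⟨j - 1, by omega⟩, ?_, Nat.cast_pred hj0⟩)
      exact (hF _).2 (Nat.sub_lt hj0 one_pos)

theorem stmt2_general (d : ℕ) (v : Fin d → ℝ) (hv : v ∈ ZeroOne d) (hv0 : v ≠ 0) :
    ((adim (Pset v) : ℤ) = 1 +
      (insert (-1 : ℤ)
        ((@Finset.filter (Fin d) (fun i => RlexLt (Pi.single i (1 : ℝ)) v)
            (Classical.decPred _) Finset.univ).image
          (fun i : Fin d => ((i : ℕ) : ℤ)))).max' (Finset.insert_nonempty _ _))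
    ∧ adim (Pset v) = sInf {j : ℕ | (∑ i ∈ Sig v, 2 ^ (i : ℕ)) ≤ 2 ^ j} := by
  have hdim := adim_Pset hv hv0
  constructor
  · rw [hdim, max'_insert_neg_one_image_val (clog_binaryValue_le v)
      fun i => by simp [rlexLt_single_iff hv]]
    ring
  · rw [hdim, Nat.sInf_setOf_le_pow_eq_clog one_lt_two]
    rfl

/-- the dimension of `P(v)` equals `1 + max({i : e_i ≺_rlex v} ∪ {−1})`;
equivalently, with `n = Σ_i 2^i v_i`, it equals `min {j : n ≤ 2^j}`. -/
theorem stmt2 (d : ℕ) (hd : 0 < d) (v : Fin d → ℝ) (hv : v ∈ ZeroOne d) (hv0 : v ≠ 0) :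
    ((adim (Pset v) : ℤ) = 1 +
      (insert (-1 : ℤ)
        ((@Finset.filter (Fin d) (fun i => RlexLt (Pi.single i (1 : ℝ)) v)
            (Classical.decPred _) Finset.univ).image
          (fun i : Fin d => ((i : ℕ) : ℤ)))).max' (Finset.insert_nonempty _ _))
    ∧ adim (Pset v) = sInf {j : ℕ | (∑ i ∈ Sig v, 2 ^ (i : ℕ)) ≤ 2 ^ j} :=
  stmt2_general d v hv hv0
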